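/- arXiv:2011.13868 — 2 statements merged into one kernel-verified Lean document; each statement's English description precedes it below -/
import Mathlib

section
/- Let the T recorded columns of (U_L, Y_L) each be a trajectory of the LTI system, and assume the observability matrix O_{T_ini}(A,C) has full column rank n. Let M† be a Moore–Penrose pseudoinverse of M = [Y_ini; U_ini; U_N] and set P* = Y_N M†. Then for every vector b = [y_ini; u_ini; u_N] lying in the column span of M (i.e., b = M g for some g ∈ ℝ^T), the sequence consisting of inputs (u_ini followed by u_N) and outputs (y_ini followed by y_N), where y_N := P* b, is a trajectory of the system. -/
open Matrix

/-- `(u, y)` is a trajectory of the discrete-time LTI system `(A, B, C, D)` of length `L`. -/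
def IsTrajectory {n m p : ℕ} (A : Matrix (Fin n) (Fin n) ℝ) (B : Matrix (Fin n) (Fin m) ℝ)
    (C : Matrix (Fin p) (Fin n) ℝ) (D : Matrix (Fin p) (Fin m) ℝ) (L : ℕ)
    (u : Fin L → Fin m → ℝ) (y : Fin L → Fin p → ℝ) : Prop :=
  ∃ x : Fin L → Fin n → ℝ,
    (∀ k : ℕ, ∀ h : k + 1 < L,
      x ⟨k + 1, h⟩ =
        A.mulVec (x ⟨k, Nat.lt_of_succ_lt h⟩) + B.mulVec (u ⟨k, Nat.lt_of_succ_lt h⟩)) ∧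
    (∀ k : Fin L, y k = C.mulVec (x k) + D.mulVec (u k))

/-- The observability matrix `O_l(A, C) = [C; CA; …; CA^{l-1}]`. -/
def obsMat {n p : ℕ} (A : Matrix (Fin n) (Fin n) ℝ) (C : Matrix (Fin p) (Fin n) ℝ) (l : ℕ) :
    Matrix (Fin l × Fin p) (Fin n) ℝ :=
  fun ki j => (C * A ^ (ki.1 : ℕ)) ki.2 j

/-- `Mp` is a Moore–Penrose pseudoinverse of `M`. -/
def IsMoorePenrose {q T : Type*} [Fintype q] [Fintype T]
    (M : Matrix q T ℝ) (Mp : Matrix T q ℝ) : Prop :=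
  M * Mp * M = M ∧ Mp * M * Mp = Mp ∧ (M * Mp)ᵀ = M * Mp ∧ (Mp * M)ᵀ = Mp * M

/-- A matrix with full column rank has injective `mulVec`. -/
lemma mulVec_eq_zero_of_rank {n : ℕ} {q : Type*} [Fintype q] (O : Matrix q (Fin n) ℝ)
    (hobs : O.rank = n) (z : Fin n → ℝ) (hz : O.mulVec z = 0) : z = 0 := by
  have h1 := LinearMap.finrank_range_add_finrank_ker O.mulVecLin
  have h2 : O.rank = Module.finrank ℝ (LinearMap.range O.mulVecLin) := rfl
  rw [← h2, hobs, Module.finrank_pi, Fintype.card_fin] at h1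
  have h3 : Module.finrank ℝ (LinearMap.ker O.mulVecLin) = 0 := by omega
  have h4 : LinearMap.ker O.mulVecLin = ⊥ := Submodule.finrank_eq_zero.mp h3
  have : z ∈ LinearMap.ker O.mulVecLin := by simpa [Matrix.mulVecLin] using hz
  simpa [h4] using this

/-- **Lemma 2 (one direction).** If the recorded columns of the data matrices are trajectories
of the system and the observability matrix `O_{T_ini}(A,C)` has full column rank `n`, then for
`P* = Y_N M†` and every `b = [y_ini; u_ini; u_N]` in the column span of `M = [Y_ini; U_ini; U_N]`,
the sequence with inputs `(u_ini, u_N)` and outputs `(y_ini, P* b)` is a trajectory of the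
system. -/
theorem spc_predictor_gives_trajectories {n m p T_ini N T : ℕ}
    (A : Matrix (Fin n) (Fin n) ℝ) (B : Matrix (Fin n) (Fin m) ℝ)
    (C : Matrix (Fin p) (Fin n) ℝ) (D : Matrix (Fin p) (Fin m) ℝ)
    (Uini : Matrix (Fin T_ini × Fin m) (Fin T) ℝ) (UN : Matrix (Fin N × Fin m) (Fin T) ℝ)
    (Yini : Matrix (Fin T_ini × Fin p) (Fin T) ℝ) (YN : Matrix (Fin N × Fin p) (Fin T) ℝ)
    (hdata : ∀ j : Fin T, IsTrajectory A B C D (T_ini + N)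
      (Fin.append (fun k i => Uini (k, i) j) (fun k i => UN (k, i) j))
      (Fin.append (fun k i => Yini (k, i) j) (fun k i => YN (k, i) j)))
    (hobs : (obsMat A C T_ini).rank = n)
    (M : Matrix ((Fin T_ini × Fin p) ⊕ (Fin T_ini × Fin m) ⊕ (Fin N × Fin m)) (Fin T) ℝ)
    (hM : M = Matrix.fromRows Yini (Matrix.fromRows Uini UN))
    (Mp : Matrix (Fin T) ((Fin T_ini × Fin p) ⊕ (Fin T_ini × Fin m) ⊕ (Fin N × Fin m)) ℝ)
    (hMp : IsMoorePenrose M Mp) :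
    ∀ b : (Fin T_ini × Fin p) ⊕ (Fin T_ini × Fin m) ⊕ (Fin N × Fin m) → ℝ,
      (∃ g : Fin T → ℝ, M.mulVec g = b) →
      IsTrajectory A B C D (T_ini + N)
        (Fin.append (fun k i => b (Sum.inr (Sum.inl (k, i))))
          (fun k i => b (Sum.inr (Sum.inr (k, i)))))
        (Fin.append (fun k i => b (Sum.inl (k, i)))
          (fun k i => (YN * Mp).mulVec b (k, i))) := by
  classical
  choose X hdyn hout using hdata
  -- matrix forms of the data
  set Xmat : Fin (T_ini + N) → Matrix (Fin n) (Fin T) ℝ :=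
    fun k => Matrix.of fun i j => X j k i with hXmat
  set Umat : Fin (T_ini + N) → Matrix (Fin m) (Fin T) ℝ :=
    fun k => Matrix.of fun i j =>
      Fin.append (fun k i => Uini (k, i) j) (fun k i => UN (k, i) j) k i with hUmat
  set Ymat : Fin (T_ini + N) → Matrix (Fin p) (Fin T) ℝ :=
    fun k => Matrix.of fun i j =>
      Fin.append (fun k i => Yini (k, i) j) (fun k i => YN (k, i) j) k i with hYmat
  have hXstep : ∀ k : ℕ, ∀ h : k + 1 < T_ini + N,
      Xmat ⟨k + 1, h⟩ = A * Xmat ⟨k, Nat.lt_of_succ_lt h⟩ + B * Umat ⟨k, Nat.lt_of_succ_lt h⟩ := by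
    intro k h
    ext i j
    simpa [hXmat, hUmat, Matrix.mul_apply, Matrix.mulVec, dotProduct]
      using congrFun (hdyn j k h) i
  have hYeq : ∀ k : Fin (T_ini + N), Ymat k = C * Xmat k + D * Umat k := by
    intro k
    ext i j
    simpa [hXmat, hUmat, hYmat, Matrix.mul_apply, Matrix.mulVec, dotProduct]
      using congrFun (hout j k) i
  -- appended combos as mulVec of the stacked matrices
  have hUapp : ∀ (v : Fin T → ℝ) (k : Fin (T_ini + N)),
      Fin.append (fun k i => Uini.mulVec v (k, i)) (fun k i => UN.mulVec v (k, i)) k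
        = (Umat k).mulVec v := by
    intro v k
    funext i
    induction k using Fin.addCases with
    | left k => simp [hUmat, Fin.append_left, Matrix.mulVec, dotProduct]
    | right k => simp [hUmat, Fin.append_right, Matrix.mulVec, dotProduct]
  have hYapp : ∀ (v : Fin T → ℝ) (k : Fin (T_ini + N)),
      Fin.append (fun k i => Yini.mulVec v (k, i)) (fun k i => YN.mulVec v (k, i)) k
        = (Ymat k).mulVec v := by
    intro v k
    funext i
    induction k using Fin.addCases with
    | left k => simp [hYmat, Fin.append_left, Matrix.mulVec, dotProduct]
    | right k => simp [hYmat, Fin.append_right, Matrix.mulVec, dotProduct]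
  -- master lemma: any linear combination of the data columns is a trajectory
  have master : ∀ v : Fin T → ℝ, IsTrajectory A B C D (T_ini + N)
      (Fin.append (fun k i => Uini.mulVec v (k, i)) (fun k i => UN.mulVec v (k, i)))
      (Fin.append (fun k i => Yini.mulVec v (k, i)) (fun k i => YN.mulVec v (k, i))) := by
    intro v
    refine ⟨fun k => (Xmat k).mulVec v, ?_, ?_⟩
    · intro k h
      dsimp only
      rw [hUapp, hXstep k h, Matrix.add_mulVec, ← Matrix.mulVec_mulVec, ← Matrix.mulVec_mulVec]
    · intro k
      dsimp only
      rw [hUapp, hYapp, hYeq k, Matrix.add_mulVec, ← Matrix.mulVec_mulVec,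
        ← Matrix.mulVec_mulVec]
  -- components of M.mulVec
  have hc : ∀ v : Fin T → ℝ,
      (∀ x, M.mulVec v (Sum.inl x) = Yini.mulVec v x) ∧
      (∀ x, M.mulVec v (Sum.inr (Sum.inl x)) = Uini.mulVec v x) ∧
      (∀ x, M.mulVec v (Sum.inr (Sum.inr x)) = UN.mulVec v x) := by
    intro v
    subst hM
    refine ⟨fun x => rfl, fun x => rfl, fun x => rfl⟩
  -- kernel inclusion: ker M ⊆ ker YN
  have hker : ∀ v : Fin T → ℝ, M.mulVec v = 0 → YN.mulVec v = 0 := by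
    intro v hv
    have c1 : Yini.mulVec v = 0 := by
      funext x; rw [← (hc v).1 x, hv]; rfl
    have c2 : Uini.mulVec v = 0 := by
      funext x; rw [← (hc v).2.1 x, hv]; rfl
    have c3 : UN.mulVec v = 0 := by
      funext x; rw [← (hc v).2.2 x, hv]; rfl
    have hUz : ∀ k : Fin (T_ini + N), (Umat k).mulVec v = 0 := by
      intro k
      rw [← hUapp v k]
      funext i
      induction k using Fin.addCases with
      | left k => simp [Fin.append_left, c2]
      | right k => simp [Fin.append_right, c3]
    funext x
    obtain ⟨kN, i⟩ := x
    have hpos : 0 < T_ini + N := by have := kN.2; omega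
    obtain ⟨z0, hz0def⟩ : ∃ z, z = (Xmat ⟨0, hpos⟩).mulVec v := ⟨_, rfl⟩
    have hpow : ∀ k : ℕ, ∀ h : k < T_ini + N,
        (Xmat ⟨k, h⟩).mulVec v = (A ^ k).mulVec z0 := by
      intro k
      induction k with
      | zero => intro h; rw [pow_zero, Matrix.one_mulVec, hz0def]
      | succ k ih =>
        intro h
        rw [hXstep k h, Matrix.add_mulVec, ← Matrix.mulVec_mulVec, ← Matrix.mulVec_mulVec,
          hUz, Matrix.mulVec_zero, add_zero, ih (Nat.lt_of_succ_lt h),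
          Matrix.mulVec_mulVec, ← pow_succ']
    have hCz : ∀ kk : Fin T_ini, C.mulVec ((A ^ (kk : ℕ)).mulVec z0) = 0 := by
      intro kk
      have hlt : (kk : ℕ) < T_ini + N := by have := kk.2; omega
      have h1 : (Ymat ⟨(kk : ℕ), hlt⟩).mulVec v
          = C.mulVec ((Xmat ⟨(kk : ℕ), hlt⟩).mulVec v) := by
        rw [hYeq, Matrix.add_mulVec, ← Matrix.mulVec_mulVec, ← Matrix.mulVec_mulVec,
          hUz, Matrix.mulVec_zero, add_zero]
      rw [← hpow (kk : ℕ) hlt, ← h1, ← hYapp v ⟨(kk : ℕ), hlt⟩]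
      have he : (⟨(kk : ℕ), hlt⟩ : Fin (T_ini + N)) = Fin.castAdd N kk := rfl
      rw [he]
      funext ii
      simp [Fin.append_left, c1]
    have hO : (obsMat A C T_ini).mulVec z0 = 0 := by
      funext x
      obtain ⟨kk, ii⟩ := x
      have : (obsMat A C T_ini).mulVec z0 (kk, ii)
          = C.mulVec ((A ^ (kk : ℕ)).mulVec z0) ii := by
        rw [Matrix.mulVec_mulVec]
        rfl
      rw [this, hCz kk]
      rfl
    have hz0 : z0 = 0 := mulVec_eq_zero_of_rank _ hobs _ hO
    have hlt2 : T_ini + (kN : ℕ) < T_ini + N := by have := kN.2; omega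
    have hXz : (Xmat ⟨T_ini + (kN : ℕ), hlt2⟩).mulVec v = 0 := by
      rw [hpow _ hlt2, hz0, Matrix.mulVec_zero]
    have h1 : (Ymat ⟨T_ini + (kN : ℕ), hlt2⟩).mulVec v = 0 := by
      rw [hYeq, Matrix.add_mulVec, ← Matrix.mulVec_mulVec, ← Matrix.mulVec_mulVec,
        hUz, Matrix.mulVec_zero, add_zero, hXz, Matrix.mulVec_zero]
    have he : (⟨T_ini + (kN : ℕ), hlt2⟩ : Fin (T_ini + N)) = Fin.natAdd T_ini kN := rfl
    have h2 := congrFun (hYapp v ⟨T_ini + (kN : ℕ), hlt2⟩) i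
    rw [he, Fin.append_right] at h2
    rw [h2, ← he, h1]
    rfl
  -- the key cancellation
  have key : ∀ g : Fin T → ℝ, YN.mulVec (Mp.mulVec (M.mulVec g)) = YN.mulVec g := by
    intro g
    have hv : M.mulVec (Mp.mulVec (M.mulVec g) - g) = 0 := by
      rw [Matrix.mulVec_sub, Matrix.mulVec_mulVec, Matrix.mulVec_mulVec,
        hMp.1, sub_self]
    have := hker _ hv
    rw [Matrix.mulVec_sub] at this
    exact sub_eq_zero.mp this
  -- conclude
  intro b hb
  obtain ⟨g, hg⟩ := hb
  have hu : (Fin.append (fun k i => b (Sum.inr (Sum.inl (k, i))))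
      (fun k i => b (Sum.inr (Sum.inr (k, i)))))
      = Fin.append (fun k i => Uini.mulVec g (k, i)) (fun k i => UN.mulVec g (k, i)) := by
    funext k
    induction k using Fin.addCases with
    | left k =>
      rw [Fin.append_left, Fin.append_left]
      funext i
      rw [← hg, (hc g).2.1]
    | right k =>
      rw [Fin.append_right, Fin.append_right]
      funext i
      rw [← hg, (hc g).2.2]
  have hy : (Fin.append (fun k i => b (Sum.inl (k, i)))
      (fun k i => (YN * Mp).mulVec b (k, i)))
      = Fin.append (fun k i => Yini.mulVec g (k, i)) (fun k i => YN.mulVec g (k, i)) := by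
    funext k
    induction k using Fin.addCases with
    | left k =>
      rw [Fin.append_left, Fin.append_left]
      funext i
      rw [← hg, (hc g).1]
    | right k =>
      rw [Fin.append_right, Fin.append_right]
      funext i
      rw [← hg, ← Matrix.mulVec_mulVec, key]
  rw [hu, hy]
  exact master g
end

section
/- Assume the observability matrix O_{T_ini}(A,C) has full column rank n. Then there exists a matrix K ∈ ℝ^{Np×(T_ini(p+m)+Nm)} (a multi-step ahead predictor) such that every trajectory (u_1,…,u_L; y_1,…,y_L) of the LTI system of length L = T_ini + N satisfies [y_{T_ini+1}; …; y_L] = K · [y_1; …; y_{T_ini}; u_1; …; u_{T_ini}; u_{T_ini+1}; …; u_L]. -/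
open Matrix

/- ### Auxiliary development -/

/-- State sequence generated from initial state `x1` and input `u`. -/
def stSeq {n m : ℕ} (A : Matrix (Fin n) (Fin n) ℝ) (B : Matrix (Fin n) (Fin m) ℝ)
    (x1 : Fin n → ℝ) (u : ℕ → Fin m → ℝ) : ℕ → Fin n → ℝ
  | 0 => x1
  | k + 1 => A.mulVec (stSeq A B x1 u k) + B.mulVec (u k)

lemma stSeq_add {n m : ℕ} (A : Matrix (Fin n) (Fin n) ℝ) (B : Matrix (Fin n) (Fin m) ℝ)
    (x1 x1' : Fin n → ℝ) (u u' : ℕ → Fin m → ℝ) :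
    ∀ k, stSeq A B (x1 + x1') (u + u') k = stSeq A B x1 u k + stSeq A B x1' u' k
  | 0 => rfl
  | k + 1 => by
    simp only [stSeq, stSeq_add A B x1 x1' u u' k, Pi.add_apply, Matrix.mulVec_add]
    abel

lemma stSeq_smul {n m : ℕ} (A : Matrix (Fin n) (Fin n) ℝ) (B : Matrix (Fin n) (Fin m) ℝ)
    (c : ℝ) (x1 : Fin n → ℝ) (u : ℕ → Fin m → ℝ) :
    ∀ k, stSeq A B (c • x1) (c • u) k = c • stSeq A B x1 u k
  | 0 => rfl
  | k + 1 => by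
    simp only [stSeq, stSeq_smul A B c x1 u k, Pi.smul_apply, Matrix.mulVec_smul, smul_add]

lemma stSeq_zero_input {n m : ℕ} (A : Matrix (Fin n) (Fin n) ℝ) (B : Matrix (Fin n) (Fin m) ℝ)
    (x1 : Fin n → ℝ) : ∀ k, stSeq A B x1 0 k = (A ^ k).mulVec x1
  | 0 => by simp [stSeq]
  | k + 1 => by
    simp [stSeq, stSeq_zero_input A B x1 k, pow_succ', Matrix.mulVec_mulVec]

/-- Extend a `Fin L`-indexed input to `ℕ` by zero. -/
def uext {m : ℕ} (L : ℕ) (u : Fin L → Fin m → ℝ) (j : ℕ) : Fin m → ℝ :=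
  if h : j < L then u ⟨j, h⟩ else 0

lemma uext_add {m L : ℕ} (u u' : Fin L → Fin m → ℝ) :
    uext L (u + u') = uext L u + uext L u' := by
  funext j
  simp only [uext, Pi.add_apply]
  split <;> simp

lemma uext_smul {m L : ℕ} (c : ℝ) (u : Fin L → Fin m → ℝ) :
    uext L (c • u) = c • uext L u := by
  funext j
  simp only [uext, Pi.smul_apply]
  split <;> simp

/-- Output at (0-indexed) time `k` from initial state/input data `z`. -/
def outAll {n m p : ℕ} (A : Matrix (Fin n) (Fin n) ℝ) (B : Matrix (Fin n) (Fin m) ℝ)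
    (C : Matrix (Fin p) (Fin n) ℝ) (D : Matrix (Fin p) (Fin m) ℝ) (L : ℕ)
    (z : (Fin n → ℝ) × (Fin L → Fin m → ℝ)) (k : ℕ) : Fin p → ℝ :=
  C.mulVec (stSeq A B z.1 (uext L z.2) k) + D.mulVec (uext L z.2 k)

lemma outAll_add {n m p : ℕ} (A : Matrix (Fin n) (Fin n) ℝ) (B : Matrix (Fin n) (Fin m) ℝ)
    (C : Matrix (Fin p) (Fin n) ℝ) (D : Matrix (Fin p) (Fin m) ℝ) (L : ℕ)
    (z z' : (Fin n → ℝ) × (Fin L → Fin m → ℝ)) (k : ℕ) :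
    outAll A B C D L (z + z') k = outAll A B C D L z k + outAll A B C D L z' k := by
  simp only [outAll, Prod.fst_add, Prod.snd_add, uext_add, stSeq_add, Pi.add_apply,
    Matrix.mulVec_add]
  abel

lemma outAll_smul {n m p : ℕ} (A : Matrix (Fin n) (Fin n) ℝ) (B : Matrix (Fin n) (Fin m) ℝ)
    (C : Matrix (Fin p) (Fin n) ℝ) (D : Matrix (Fin p) (Fin m) ℝ) (L : ℕ)
    (c : ℝ) (z : (Fin n → ℝ) × (Fin L → Fin m → ℝ)) (k : ℕ) :
    outAll A B C D L (c • z) k = c • outAll A B C D L z k := by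
  simp only [outAll, Prod.smul_fst, Prod.smul_snd, uext_smul, stSeq_smul, Pi.smul_apply,
    Matrix.mulVec_smul, smul_add]

/-- The linear map sending `(x₁, u)` to the data vector `[y_past; u_past; u_future]`. -/
def PhiMap {n m p : ℕ} (A : Matrix (Fin n) (Fin n) ℝ) (B : Matrix (Fin n) (Fin m) ℝ)
    (C : Matrix (Fin p) (Fin n) ℝ) (D : Matrix (Fin p) (Fin m) ℝ) (T_ini N : ℕ) :
    ((Fin n → ℝ) × (Fin (T_ini + N) → Fin m → ℝ)) →ₗ[ℝ]
      (((Fin T_ini × Fin p) ⊕ (Fin T_ini × Fin m) ⊕ (Fin N × Fin m)) → ℝ) where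
  toFun z := Sum.elim (fun ki => outAll A B C D (T_ini + N) z (ki.1 : ℕ) ki.2)
    (Sum.elim (fun ki => z.2 (Fin.castAdd N ki.1) ki.2)
      (fun ki => z.2 (Fin.natAdd T_ini ki.1) ki.2))
  map_add' z z' := by
    funext s
    rcases s with ki | ki | ki <;>
      simp [outAll_add, Prod.fst_add, Prod.snd_add]
  map_smul' c z := by
    funext s
    rcases s with ki | ki | ki <;>
      simp [outAll_smul, Prod.smul_fst, Prod.smul_snd]

/-- The linear map sending `(x₁, u)` to the future outputs. -/
def PsiMap {n m p : ℕ} (A : Matrix (Fin n) (Fin n) ℝ) (B : Matrix (Fin n) (Fin m) ℝ)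
    (C : Matrix (Fin p) (Fin n) ℝ) (D : Matrix (Fin p) (Fin m) ℝ) (T_ini N : ℕ) :
    ((Fin n → ℝ) × (Fin (T_ini + N) → Fin m → ℝ)) →ₗ[ℝ] ((Fin N × Fin p) → ℝ) where
  toFun z := fun ki => outAll A B C D (T_ini + N) z (T_ini + (ki.1 : ℕ)) ki.2
  map_add' z z' := by
    funext ki
    simp [outAll_add]
  map_smul' c z := by
    funext ki
    simp [outAll_smul]

/-- Factorization of linear maps over a field. -/
lemma factor_through {K V W X : Type*} [Field K] [AddCommGroup V] [Module K V]
    [AddCommGroup W] [Module K W] [AddCommGroup X] [Module K X]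
    (Φ : V →ₗ[K] W) (Ψ : V →ₗ[K] X) (h : LinearMap.ker Φ ≤ LinearMap.ker Ψ) :
    ∃ F : W →ₗ[K] X, ∀ v, F (Φ v) = Ψ v := by
  set q := LinearMap.ker Φ
  have hΦ : q ≤ LinearMap.ker Φ := le_rfl
  let Φb : (V ⧸ q) →ₗ[K] W := q.liftQ Φ hΦ
  let Ψb : (V ⧸ q) →ₗ[K] X := q.liftQ Ψ h
  have hinj : LinearMap.ker Φb = ⊥ := Submodule.ker_liftQ_eq_bot q Φ hΦ le_rfl
  obtain ⟨g, hg⟩ := Φb.exists_leftInverse_of_injective hinj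
  refine ⟨Ψb.comp g, fun v => ?_⟩
  have h1 : Φ v = Φb (q.mkQ v) := rfl
  have h2 : g (Φb (q.mkQ v)) = q.mkQ v := by
    have := LinearMap.congr_fun hg (q.mkQ v)
    simpa using this
  simp only [LinearMap.comp_apply, h1, h2]
  rfl

/-- **Existence of a multi-step ahead predictor.** If `O_{T_ini}(A,C)` has full column rank `n`,
then there exists a matrix `K` such that every trajectory `(u, y)` of length `T_ini + N`
satisfies `[y_{T_ini+1}; …; y_L] = K [y_1; …; y_{T_ini}; u_1; …; u_{T_ini}; u_{T_ini+1}; …; u_L]`. -/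
theorem exists_multistep_predictor {n m p T_ini N : ℕ}
    (A : Matrix (Fin n) (Fin n) ℝ) (B : Matrix (Fin n) (Fin m) ℝ)
    (C : Matrix (Fin p) (Fin n) ℝ) (D : Matrix (Fin p) (Fin m) ℝ)
    (hobs : (obsMat A C T_ini).rank = n) :
    ∃ K : Matrix (Fin N × Fin p) ((Fin T_ini × Fin p) ⊕ (Fin T_ini × Fin m) ⊕ (Fin N × Fin m)) ℝ,
      ∀ (u : Fin (T_ini + N) → Fin m → ℝ) (y : Fin (T_ini + N) → Fin p → ℝ),
        IsTrajectory A B C D (T_ini + N) u y →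
        (fun ki : Fin N × Fin p => y (Fin.natAdd T_ini ki.1) ki.2) =
          K.mulVec (Sum.elim (fun ki : Fin T_ini × Fin p => y (Fin.castAdd N ki.1) ki.2)
            (Sum.elim (fun ki : Fin T_ini × Fin m => u (Fin.castAdd N ki.1) ki.2)
              (fun ki : Fin N × Fin m => u (Fin.natAdd T_ini ki.1) ki.2))) := by
  -- full column rank ⇒ mulVec is injective on obsMat
  have hker : ∀ v : Fin n → ℝ, (obsMat A C T_ini).mulVec v = 0 → v = 0 := by
    intro v hv
    have hrn := (obsMat A C T_ini).mulVecLin.finrank_range_add_finrank_ker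
    rw [Module.finrank_pi, Fintype.card_fin] at hrn
    have hobs' : Module.finrank ℝ (LinearMap.range (obsMat A C T_ini).mulVecLin) = n := hobs
    have hk0 : Module.finrank ℝ (LinearMap.ker (obsMat A C T_ini).mulVecLin) = 0 := by omega
    have hbot : LinearMap.ker (obsMat A C T_ini).mulVecLin = ⊥ :=
      Submodule.finrank_eq_zero.mp hk0
    have : v ∈ LinearMap.ker (obsMat A C T_ini).mulVecLin := by
      simpa [LinearMap.mem_ker, Matrix.mulVecLin_apply] using hv
    rw [hbot] at this
    simpa using this
  -- kernel inclusion
  have hkerle : LinearMap.ker (PhiMap A B C D T_ini N) ≤ LinearMap.ker (PsiMap A B C D T_ini N) := by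
    intro z hz
    rw [LinearMap.mem_ker] at hz ⊢
    -- all inputs vanish
    have hu : z.2 = 0 := by
      funext j i
      by_cases hj : (j : ℕ) < T_ini
      · have := congrFun hz (Sum.inr (Sum.inl (⟨(j : ℕ), hj⟩, i)))
        simpa [PhiMap, show Fin.castAdd N (⟨(j : ℕ), hj⟩ : Fin T_ini) = j from
          Fin.ext rfl] using this
      · have hj2 : (j : ℕ) - T_ini < N := by omega
        have := congrFun hz (Sum.inr (Sum.inr (⟨(j : ℕ) - T_ini, hj2⟩, i)))
        have hje : Fin.natAdd T_ini (⟨(j : ℕ) - T_ini, hj2⟩ : Fin N) = j :=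
          Fin.ext (by simp [Fin.natAdd]; omega)
        simpa [PhiMap, hje] using this
    have hue : uext (T_ini + N) z.2 = 0 := by
      funext j
      simp only [uext, hu]
      split <;> simp
    -- past outputs vanish ⇒ obsMat ∘ x₁ = 0
    have hobs0 : (obsMat A C T_ini).mulVec z.1 = 0 := by
      funext ki
      have h0 := congrFun hz (Sum.inl ki)
      simp only [PhiMap, LinearMap.coe_mk, AddHom.coe_mk, Sum.elim_inl, Pi.zero_apply] at h0
      have : outAll A B C D (T_ini + N) z (ki.1 : ℕ) ki.2 = 0 := h0
      rw [outAll, hue, stSeq_zero_input] at this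
      simp only [Pi.zero_apply, Matrix.mulVec_zero, Pi.add_apply, add_zero] at this
      calc (obsMat A C T_ini).mulVec z.1 ki
          = ((C * A ^ (ki.1 : ℕ)).mulVec z.1) ki.2 := rfl
        _ = C.mulVec ((A ^ (ki.1 : ℕ)).mulVec z.1) ki.2 := by
            rw [Matrix.mulVec_mulVec]
        _ = 0 := this
    have hx0 : z.1 = 0 := hker _ hobs0
    -- conclude future outputs vanish
    funext ki
    simp only [PsiMap, LinearMap.coe_mk, AddHom.coe_mk, outAll, hue, hx0,
      stSeq_zero_input, Pi.zero_apply, Matrix.mulVec_zero, Pi.add_apply, add_zero]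
  obtain ⟨F, hF⟩ := factor_through (PhiMap A B C D T_ini N) (PsiMap A B C D T_ini N) hkerle
  refine ⟨LinearMap.toMatrix' F, ?_⟩
  rintro u y ⟨x, hx, hy⟩
  rcases Nat.eq_zero_or_pos N with hN | hN
  · subst hN
    funext ki
    exact ki.1.elim0
  have hL : 0 < T_ini + N := by omega
  set z : (Fin n → ℝ) × (Fin (T_ini + N) → Fin m → ℝ) := (x ⟨0, hL⟩, u) with hzdef
  -- state sequence matches
  have hst : ∀ k (h : k < T_ini + N), stSeq A B z.1 (uext (T_ini + N) z.2) k = x ⟨k, h⟩ := by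
    intro k
    induction k with
    | zero => intro h; rfl
    | succ k ih =>
      intro h
      have hk : k < T_ini + N := Nat.lt_of_succ_lt h
      rw [stSeq, ih hk, hx k h]
      congr 1
      simp only [hzdef, uext, dif_pos hk]
  -- outputs match
  have hout : ∀ k (h : k < T_ini + N), outAll A B C D (T_ini + N) z k = y ⟨k, h⟩ := by
    intro k h
    rw [outAll, hst k h, hy ⟨k, h⟩]
    congr 1
    simp only [hzdef, uext, dif_pos h]
  -- Φ z equals the data vector
  have hPhi : PhiMap A B C D T_ini N z =
      Sum.elim (fun ki : Fin T_ini × Fin p => y (Fin.castAdd N ki.1) ki.2)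
        (Sum.elim (fun ki : Fin T_ini × Fin m => u (Fin.castAdd N ki.1) ki.2)
          (fun ki : Fin N × Fin m => u (Fin.natAdd T_ini ki.1) ki.2)) := by
    funext s
    rcases s with ki | ki | ki
    · have hk : (ki.1 : ℕ) < T_ini + N := by omega
      have := hout (ki.1 : ℕ) hk
      simp only [PhiMap, LinearMap.coe_mk, AddHom.coe_mk, Sum.elim_inl]
      rw [this]
      congr 1
    · rfl
    · rfl
  have hPsi : PsiMap A B C D T_ini N z =
      fun ki : Fin N × Fin p => y (Fin.natAdd T_ini ki.1) ki.2 := by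
    funext ki
    have hk : T_ini + (ki.1 : ℕ) < T_ini + N := by omega
    have := hout (T_ini + (ki.1 : ℕ)) hk
    simp only [PsiMap, LinearMap.coe_mk, AddHom.coe_mk]
    rw [this]
    congr 1
  rw [← hPhi, ← hPsi]
  have : (LinearMap.toMatrix' F).mulVec (PhiMap A B C D T_ini N z) =
      Matrix.toLin' (LinearMap.toMatrix' F) (PhiMap A B C D T_ini N z) := rfl
  rw [this, Matrix.toLin'_toMatrix']
  exact (hF z).symm
end
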